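/- arXiv:0902.0517 — 2 statements merged into one kernel-verified Lean document; each statement's English description precedes it below -/
import Mathlib

section
/- The map ω^B(x,y) := exp(-i Γ^B(⟨z, z+x, z+x+y⟩)) (as a function of z), where Γ^B(⟨a,b,c⟩) denotes the flux of a closed 2-form B through the triangle with vertices a,b,c, satisfies the normalized 2-cocycle identity: for all x,y,z,w ∈ ℝⁿ, ω^B(w; x+y, z)·ω^B(w; x, y) = ω^B(w+x; y, z)·ω^B(w; x, y+z), and ω^B(w; x,0) = ω^B(w; 0,x) = 1. -/
/- STATEMENT 0: ω^B(z; x, y) := exp(-i Γ^B(⟨z, z+x, z+x+y⟩)), with Γ^B the flux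
of a closed smooth bounded 2-form B through the triangle, satisfies the
normalized 2-cocycle identity. -/

noncomputable section

abbrev Evec (n : ℕ) := EuclideanSpace ℝ (Fin n)

/-- The flux of the 2-form `B` through the oriented triangle ⟨a,b,c⟩:
Γ^B(⟨a,b,c⟩) = ∫₀¹∫₀¹ s·B(a+s(b−a)+st(c−b))(b−a, c−b) dt ds. -/
noncomputable def fluxB {n : ℕ} (B : Evec n → (Evec n →L[ℝ] Evec n →L[ℝ] ℝ))
    (a b c : Evec n) : ℝ :=
  ∫ s in (0:ℝ)..1, ∫ t in (0:ℝ)..1,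
    s * B (a + s • (b - a) + (s * t) • (c - b)) (b - a) (c - b)

/-- ω^B(z; x, y) := exp(−i Γ^B(⟨z, z+x, z+x+y⟩)). -/
noncomputable def omegaB {n : ℕ} (B : Evec n → (Evec n →L[ℝ] Evec n →L[ℝ] ℝ))
    (z x y : Evec n) : ℂ :=
  Complex.exp (-(fluxB B z (z + x) (z + x + y)) * Complex.I)


open MeasureTheory intervalIntegral Function
set_option linter.unusedSectionVars false
set_option maxHeartbeats 1000000

section main
variable {n : ℕ} {B : Evec n → (Evec n →L[ℝ] Evec n →L[ℝ] ℝ)}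

noncomputable def dd (B : Evec n → (Evec n →L[ℝ] Evec n →L[ℝ] ℝ))
    (p q A A' C C' : Evec n) (r : ℝ) : ℝ :=
  fderiv ℝ B (p + r • q) q (A + r • A') (C + r • C')
    + B (p + r • q) A' (C + r • C') + B (p + r • q) (A + r • A') C'

variable (B) in
noncomputable def DU (w x y z : Evec n) (u s t : ℝ) : ℝ :=
  dd B w (x + s•y + (s*t)•z) 0 (y + t•z) 0 (s•z) u

variable (B) in
noncomputable def DS (w x y z : Evec n) (u s t : ℝ) : ℝ :=
  dd B (w + u•x) (u•y + (u*t)•z) x (y + t•z) 0 (u•z) s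

variable (B) in
noncomputable def DT (w x y z : Evec n) (u s t : ℝ) : ℝ :=
  dd B (w + u•x + (u*s)•y) ((u*s)•z) (x + s•y) (s•z) (u•y) (u•z) t

lemma pointwise
    (hanti : ∀ (z : Evec n) (u v : Evec n), B z u v = - B z v u)
    (hclosed : ∀ (z u v w : Evec n),
      fderiv ℝ B z u v w - fderiv ℝ B z v u w + fderiv ℝ B z w u v = 0)
    (w x y z : Evec n) (u s t : ℝ) :
    DS B w x y z u s t = DU B w x y z u s t + DT B w x y z u s t := by
  unfold DU DS DT dd
  rw [show u•y + (u*t)•z = u•(y+t•z) by module,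
      show (w + u•x) + s•(u•(y+t•z)) = w + u•x + (u*s)•y + (u*s*t)•z by module,
      show w + u•(x + s•y + (s*t)•z) = w + u•x + (u*s)•y + (u*s*t)•z by module,
      show (w + u•x + (u*s)•y) + t•((u*s)•z) = w + u•x + (u*s)•y + (u*s*t)•z by module,
      show x + s•(y+t•z) = x + s•y + (s*t)•z by module,
      show (x+s•y) + t•(s•z) = x + s•y + (s*t)•z by module,
      show (0:Evec n) + s•(u•z) = (u*s)•z by module,
      show (0:Evec n) + u•(s•z) = (u*s)•z by module,
      show u•y + t•(u•z) = u•(y+t•z) by module,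
      show (0:Evec n) + u•(y+t•z) = u•(y+t•z) by module]
  simp only [_root_.map_smul, ContinuousLinearMap.smul_apply, smul_eq_mul]
  linear_combination (-(u*(u*s))) * hclosed (w + u•x + (u*s)•y + (u*s*t)•z)
      (x + s•y + (s*t)•z) (y + t•z) z
    - (u*s) * hanti (w + u•x + (u*s)•y + (u*s*t)•z) (y+t•z) z

lemma swap2 (f : ℝ → ℝ → ℝ) (hf : Continuous (Function.uncurry f)) :
    ∫ a in (0:ℝ)..1, ∫ b in (0:ℝ)..1, f a b
      = ∫ b in (0:ℝ)..1, ∫ a in (0:ℝ)..1, f a b := by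
  have h01 : (0:ℝ) ≤ 1 := zero_le_one
  have hint : Integrable (Function.uncurry f)
      ((volume.restrict (Set.Ioc (0:ℝ) 1)).prod (volume.restrict (Set.Ioc (0:ℝ) 1))) := by
    rw [Measure.prod_restrict]
    exact (hf.continuousOn.integrableOn_compact
        (IsCompact.prod isCompact_Icc isCompact_Icc)).mono_set
      (Set.prod_mono Set.Ioc_subset_Icc_self Set.Ioc_subset_Icc_self)
  have := MeasureTheory.integral_integral_swap (μ := volume.restrict (Set.Ioc (0:ℝ) 1))
    (ν := volume.restrict (Set.Ioc (0:ℝ) 1)) hint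
  simpa [intervalIntegral.integral_of_le h01] using this

lemma hzz (hanti : ∀ (z : Evec n) (u v : Evec n), B z u v = - B z v u)
    (p v : Evec n) : B p v v = 0 := by have := hanti p v v; linarith

section withSmooth
variable (hsmooth : ContDiff ℝ (⊤ : ℕ∞) B)
  (hanti : ∀ (z : Evec n) (u v : Evec n), B z u v = - B z v u)
include hsmooth

lemma contB : Continuous B := hsmooth.continuous
lemma contD : Continuous fun p : Evec n × Evec n => fderiv ℝ B p.1 p.2 :=
  hsmooth.continuous_fderiv_apply (by simp)

lemma hasDerivAt_dd (p q A A' C C' : Evec n) (r : ℝ) :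
    HasDerivAt (fun r : ℝ => B (p + r • q) (A + r • A') (C + r • C'))
      (dd B p q A A' C C' r) r := by
  have h1 : HasDerivAt (fun r : ℝ => p + r • q) q r := by
    simpa using ((hasDerivAt_id r).smul_const q).const_add p
  have hB : HasFDerivAt B (fderiv ℝ B (p + r • q)) (p + r • q) :=
    (hsmooth.differentiable (by simp) (p + r • q)).hasFDerivAt
  have h2 : HasDerivAt (fun r : ℝ => B (p + r • q)) (fderiv ℝ B (p + r • q) q) r :=
    HasFDerivAt.comp_hasDerivAt (l := B) r hB h1
  have h3 : HasDerivAt (fun r : ℝ => A + r • A') A' r := by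
    simpa using ((hasDerivAt_id r).smul_const A').const_add A
  have h4 : HasDerivAt (fun r : ℝ => C + r • C') C' r := by
    simpa using ((hasDerivAt_id r).smul_const C').const_add C
  have h5 := (h2.clm_apply h3).clm_apply h4
  simpa [dd, add_assoc] using h5

lemma integral_dd (p q A A' C C' : Evec n) :
    ∫ r in (0:ℝ)..1, dd B p q A A' C C' r = B (p + q) (A + A') (C + C') - B p A C := by
  have hB := contB hsmooth
  have hD := contD hsmooth
  have h := intervalIntegral.integral_eq_sub_of_hasDerivAt (a := (0:ℝ)) (b := 1)
    (f := fun r : ℝ => B (p + r • q) (A + r • A') (C + r • C'))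
    (f' := fun r => dd B p q A A' C C' r)
    (fun r _ => hasDerivAt_dd hsmooth p q A A' C C' r)
    (by apply Continuous.intervalIntegrable; unfold dd; fun_prop)
  simpa using h

include hanti in
lemma hF1 (w x y z : Evec n) :
    fluxB B w (w+x+y) (w+x+y+z)
      = ∫ u in (0:ℝ)..1, ∫ t in (0:ℝ)..1, ∫ s in (0:ℝ)..1, DS B w x y z u s t := by
  unfold fluxB
  refine intervalIntegral.integral_congr fun u _ => ?_
  refine intervalIntegral.integral_congr fun t _ => ?_
  unfold DS
  rw [integral_dd hsmooth]
  rw [show w+x+y-w = (x+y : Evec n) by module,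
      show w+x+y+z-(w+x+y) = (z : Evec n) by module,
      show w + u•x + (u•y + (u*t)•z) = w + u•(x+y) + (u*t)•z by module]
  simp only [_root_.map_add, _root_.map_smul, ContinuousLinearMap.add_apply,
    ContinuousLinearMap.smul_apply, smul_eq_mul, _root_.map_zero,
    ContinuousLinearMap.zero_apply, zero_add, add_zero, sub_zero]
  linear_combination (-(u*t)) * hzz hanti (w + u•(x+y) + (u*t)•z) z

include hanti in
lemma hF2 (w x y : Evec n) :
    fluxB B w (w+x) (w+x+y)
      = ∫ u in (0:ℝ)..1, ∫ s in (0:ℝ)..1, B (w + u•x + (u*s)•y) (x + s•y) (u•y) := by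
  unfold fluxB
  refine intervalIntegral.integral_congr fun u _ => ?_
  refine intervalIntegral.integral_congr fun s _ => ?_
  rw [show w+x-w = (x : Evec n) by module,
      show w+x+y-(w+x) = (y : Evec n) by module]
  simp only [_root_.map_add, _root_.map_smul, ContinuousLinearMap.add_apply,
    ContinuousLinearMap.smul_apply, smul_eq_mul]
  linear_combination (-(u*s)) * hzz hanti (w + u•x + (u*s)•y) y

include hanti in
lemma hF3 (w x y z : Evec n) :
    fluxB B (w+x) (w+x+y) (w+x+y+z)
      = ∫ s in (0:ℝ)..1, ∫ t in (0:ℝ)..1, ∫ u in (0:ℝ)..1, DU B w x y z u s t := by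
  unfold fluxB
  refine intervalIntegral.integral_congr fun s _ => ?_
  refine intervalIntegral.integral_congr fun t _ => ?_
  unfold DU
  rw [integral_dd hsmooth]
  rw [show w+x+y-(w+x) = (y : Evec n) by module,
      show w+x+y+z-(w+x+y) = (z : Evec n) by module,
      show w + (x + s•y + (s*t)•z) = w + x + s•y + (s*t)•z by module]
  simp only [_root_.map_add, _root_.map_smul, ContinuousLinearMap.add_apply,
    ContinuousLinearMap.smul_apply, smul_eq_mul, _root_.map_zero,
    ContinuousLinearMap.zero_apply, zero_add, add_zero, sub_zero]
  linear_combination (-(s*t)) * hzz hanti (w + x + s•y + (s*t)•z) z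

include hanti in
lemma hF4 (w x y z : Evec n) :
    fluxB B w (w+x) (w+x+y+z)
      = ∫ u in (0:ℝ)..1, ∫ s in (0:ℝ)..1,
          B (w + u•x + (u*s)•y + (u*s)•z) (x + s•y + s•z) (u•y + u•z) := by
  unfold fluxB
  refine intervalIntegral.integral_congr fun u _ => ?_
  refine intervalIntegral.integral_congr fun s _ => ?_
  rw [show w+x-w = (x : Evec n) by module,
      show w+x+y+z-(w+x) = (y+z : Evec n) by module,
      show w + u•x + (u*s)•y + (u*s)•z = w + u•x + (u*s)•(y+z) by module]
  simp only [_root_.map_add, _root_.map_smul, ContinuousLinearMap.add_apply,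
    ContinuousLinearMap.smul_apply, smul_eq_mul]
  linear_combination (-(u*s)) * hanti (w + u•x + (u*s)•(y+z)) z y
    - (u*s) * hzz hanti (w + u•x + (u*s)•(y+z)) y
    - (u*s) * hzz hanti (w + u•x + (u*s)•(y+z)) z

lemma hDT1 (w x y z : Evec n) (u s : ℝ) :
    ∫ t in (0:ℝ)..1, DT B w x y z u s t
      = B (w + u•x + (u*s)•y + (u*s)•z) (x + s•y + s•z) (u•y + u•z)
        - B (w + u•x + (u*s)•y) (x + s•y) (u•y) := by
  unfold DT; rw [integral_dd hsmooth]




lemma contDU' {X : Type} [TopologicalSpace X] (w x y z : Evec n)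
    (g1 g2 g3 : X → ℝ) (h1 : Continuous g1) (h2 : Continuous g2) (h3 : Continuous g3) :
    Continuous fun v : X => DU B w x y z (g1 v) (g2 v) (g3 v) := by
  have hB := contB hsmooth; have hD := contD hsmooth
  unfold DU dd; fun_prop

lemma contDS' {X : Type} [TopologicalSpace X] (w x y z : Evec n)
    (g1 g2 g3 : X → ℝ) (h1 : Continuous g1) (h2 : Continuous g2) (h3 : Continuous g3) :
    Continuous fun v : X => DS B w x y z (g1 v) (g2 v) (g3 v) := by
  have hB := contB hsmooth; have hD := contD hsmooth
  unfold DS dd; fun_prop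

lemma contDT' {X : Type} [TopologicalSpace X] (w x y z : Evec n)
    (g1 g2 g3 : X → ℝ) (h1 : Continuous g1) (h2 : Continuous g2) (h3 : Continuous g3) :
    Continuous fun v : X => DT B w x y z (g1 v) (g2 v) (g3 v) := by
  have hB := contB hsmooth; have hD := contD hsmooth
  unfold DT dd; fun_prop


lemma cJ2L (w x y z : Evec n) :
    Continuous fun p : ℝ × ℝ => ∫ s in (0:ℝ)..1, DU B w x y z p.1 s p.2 := by
  apply intervalIntegral.continuous_parametric_intervalIntegral_of_continuous'
    (f := fun (p : ℝ×ℝ) s => DU B w x y z p.1 s p.2) ?_ 0 1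
  have h := contDU' hsmooth w x y z (fun q : (ℝ×ℝ)×ℝ => q.1.1) (fun q => q.2) (fun q => q.1.2)
    (by fun_prop) (by fun_prop) (by fun_prop)
  exact h

lemma cK2L (w x y z : Evec n) :
    Continuous fun p : ℝ × ℝ => ∫ s in (0:ℝ)..1, DT B w x y z p.1 s p.2 := by
  apply intervalIntegral.continuous_parametric_intervalIntegral_of_continuous'
    (f := fun (p : ℝ×ℝ) s => DT B w x y z p.1 s p.2) ?_ 0 1
  have h := contDT' hsmooth w x y z (fun q : (ℝ×ℝ)×ℝ => q.1.1) (fun q => q.2) (fun q => q.1.2)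
    (by fun_prop) (by fun_prop) (by fun_prop)
  exact h

lemma cJ1L (w x y z : Evec n) (u : ℝ) :
    Continuous fun t => ∫ s in (0:ℝ)..1, DU B w x y z u s t := by
  apply intervalIntegral.continuous_parametric_intervalIntegral_of_continuous'
    (f := fun (t : ℝ) s => DU B w x y z u s t) ?_ 0 1
  have h := contDU' hsmooth w x y z (fun _ : ℝ×ℝ => u) (fun q => q.2) (fun q => q.1)
    (by fun_prop) (by fun_prop) (by fun_prop)
  exact h

lemma cK1L (w x y z : Evec n) (u : ℝ) :
    Continuous fun t => ∫ s in (0:ℝ)..1, DT B w x y z u s t := by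
  apply intervalIntegral.continuous_parametric_intervalIntegral_of_continuous'
    (f := fun (t : ℝ) s => DT B w x y z u s t) ?_ 0 1
  have h := contDT' hsmooth w x y z (fun _ : ℝ×ℝ => u) (fun q => q.2) (fun q => q.1)
    (by fun_prop) (by fun_prop) (by fun_prop)
  exact h

lemma cJ0L (w x y z : Evec n) :
    Continuous fun u => ∫ t in (0:ℝ)..1, ∫ s in (0:ℝ)..1, DU B w x y z u s t := by
  apply intervalIntegral.continuous_parametric_intervalIntegral_of_continuous'
    (f := fun (u : ℝ) t => ∫ s in (0:ℝ)..1, DU B w x y z u s t) ?_ 0 1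
  exact cJ2L hsmooth w x y z

lemma cK0L (w x y z : Evec n) :
    Continuous fun u => ∫ t in (0:ℝ)..1, ∫ s in (0:ℝ)..1, DT B w x y z u s t := by
  apply intervalIntegral.continuous_parametric_intervalIntegral_of_continuous'
    (f := fun (u : ℝ) t => ∫ s in (0:ℝ)..1, DT B w x y z u s t) ?_ 0 1
  exact cK2L hsmooth w x y z

lemma iUL (w x y z : Evec n) (u t : ℝ) :
    IntervalIntegrable (fun s => DU B w x y z u s t) volume 0 1 := by
  have h := contDU' hsmooth w x y z (fun _ : ℝ => u) (fun s : ℝ => s) (fun _ : ℝ => t)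
    continuous_const continuous_id continuous_const
  exact h.intervalIntegrable 0 1

lemma iTL (w x y z : Evec n) (u t : ℝ) :
    IntervalIntegrable (fun s => DT B w x y z u s t) volume 0 1 := by
  have h := contDT' hsmooth w x y z (fun _ : ℝ => u) (fun s : ℝ => s) (fun _ : ℝ => t)
    continuous_const continuous_id continuous_const
  exact h.intervalIntegrable 0 1

include hanti in
lemma e1L (hclosed : ∀ (z u v w : Evec n),
      fderiv ℝ B z u v w - fderiv ℝ B z v u w + fderiv ℝ B z w u v = 0)
    (w x y z : Evec n) :
    (∫ u in (0:ℝ)..1, ∫ t in (0:ℝ)..1, ∫ s in (0:ℝ)..1, DS B w x y z u s t)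
      = (∫ u in (0:ℝ)..1, ∫ t in (0:ℝ)..1, ∫ s in (0:ℝ)..1, DU B w x y z u s t)
        + ∫ u in (0:ℝ)..1, ∫ t in (0:ℝ)..1, ∫ s in (0:ℝ)..1, DT B w x y z u s t := by
  have hsplit : ∀ u t : ℝ, (∫ s in (0:ℝ)..1, DS B w x y z u s t)
      = (∫ s in (0:ℝ)..1, DU B w x y z u s t) + ∫ s in (0:ℝ)..1, DT B w x y z u s t := by
    intro u t
    rw [← intervalIntegral.integral_add (iUL hsmooth w x y z u t) (iTL hsmooth w x y z u t)]
    exact intervalIntegral.integral_congr fun s _ => pointwise hanti hclosed w x y z u s t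
  have inner : ∀ u : ℝ, (∫ t in (0:ℝ)..1, ∫ s in (0:ℝ)..1, DS B w x y z u s t)
      = (∫ t in (0:ℝ)..1, ∫ s in (0:ℝ)..1, DU B w x y z u s t)
        + ∫ t in (0:ℝ)..1, ∫ s in (0:ℝ)..1, DT B w x y z u s t := by
    intro u
    rw [intervalIntegral.integral_congr (g := fun t =>
          (∫ s in (0:ℝ)..1, DU B w x y z u s t) + ∫ s in (0:ℝ)..1, DT B w x y z u s t)
          (fun t _ => hsplit u t),
        intervalIntegral.integral_add ((cJ1L hsmooth w x y z u).intervalIntegrable 0 1)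
          ((cK1L hsmooth w x y z u).intervalIntegrable 0 1)]
  rw [intervalIntegral.integral_congr (fun u _ => inner u),
      intervalIntegral.integral_add ((cJ0L hsmooth w x y z).intervalIntegrable 0 1)
        ((cK0L hsmooth w x y z).intervalIntegrable 0 1)]

lemma e2La (w x y z : Evec n) (u : ℝ) :
    (∫ t in (0:ℝ)..1, ∫ s in (0:ℝ)..1, DU B w x y z u s t)
      = ∫ s in (0:ℝ)..1, ∫ t in (0:ℝ)..1, DU B w x y z u s t := by
  apply swap2
  have h := contDU' hsmooth w x y z (fun _ : ℝ×ℝ => u) (fun p => p.2) (fun p => p.1)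
    (by fun_prop) (by fun_prop) (by fun_prop)
  exact h

lemma e2Lc (w x y z : Evec n) (s : ℝ) :
    (∫ u in (0:ℝ)..1, ∫ t in (0:ℝ)..1, DU B w x y z u s t)
      = ∫ t in (0:ℝ)..1, ∫ u in (0:ℝ)..1, DU B w x y z u s t := by
  apply swap2
  have h := contDU' hsmooth w x y z (fun p : ℝ×ℝ => p.1) (fun _ => s) (fun p => p.2)
    (by fun_prop) (by fun_prop) (by fun_prop)
  exact h

lemma cL2L (w x y z : Evec n) :
    Continuous fun p : ℝ × ℝ => ∫ t in (0:ℝ)..1, DU B w x y z p.1 p.2 t := by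
  apply intervalIntegral.continuous_parametric_intervalIntegral_of_continuous'
    (f := fun (p : ℝ×ℝ) t => DU B w x y z p.1 p.2 t) ?_ 0 1
  have h := contDU' hsmooth w x y z (fun q : (ℝ×ℝ)×ℝ => q.1.1) (fun q => q.1.2) (fun q => q.2)
    (by fun_prop) (by fun_prop) (by fun_prop)
  exact h

lemma e2L (w x y z : Evec n) :
    (∫ u in (0:ℝ)..1, ∫ t in (0:ℝ)..1, ∫ s in (0:ℝ)..1, DU B w x y z u s t)
      = ∫ s in (0:ℝ)..1, ∫ t in (0:ℝ)..1, ∫ u in (0:ℝ)..1, DU B w x y z u s t := by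
  have s2 : (∫ u in (0:ℝ)..1, ∫ s in (0:ℝ)..1, ∫ t in (0:ℝ)..1, DU B w x y z u s t)
      = ∫ s in (0:ℝ)..1, ∫ u in (0:ℝ)..1, ∫ t in (0:ℝ)..1, DU B w x y z u s t :=
    swap2 (fun u s => ∫ t in (0:ℝ)..1, DU B w x y z u s t) (cL2L hsmooth w x y z)
  rw [intervalIntegral.integral_congr (fun u _ => e2La hsmooth w x y z u), s2,
      intervalIntegral.integral_congr (fun s _ => e2Lc hsmooth w x y z s)]

lemma e3L (w x y z : Evec n) :
    (∫ u in (0:ℝ)..1, ∫ t in (0:ℝ)..1, ∫ s in (0:ℝ)..1, DT B w x y z u s t)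
      = ∫ u in (0:ℝ)..1, ∫ s in (0:ℝ)..1, ∫ t in (0:ℝ)..1, DT B w x y z u s t := by
  refine intervalIntegral.integral_congr fun u _ => ?_
  apply swap2
  have h := contDT' hsmooth w x y z (fun _ : ℝ×ℝ => u) (fun p => p.2) (fun p => p.1)
    (by fun_prop) (by fun_prop) (by fun_prop)
  exact h

lemma e4L (w x y z : Evec n) :
    (∫ u in (0:ℝ)..1, ∫ s in (0:ℝ)..1, ∫ t in (0:ℝ)..1, DT B w x y z u s t)
      = (∫ u in (0:ℝ)..1, ∫ s in (0:ℝ)..1,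
          B (w + u•x + (u*s)•y + (u*s)•z) (x + s•y + s•z) (u•y + u•z))
        - ∫ u in (0:ℝ)..1, ∫ s in (0:ℝ)..1, B (w + u•x + (u*s)•y) (x + s•y) (u•y) := by
  have hB := contB hsmooth; have hD := contD hsmooth
  have cF4 : Continuous fun p : ℝ×ℝ =>
      B (w + p.1•x + (p.1*p.2)•y + (p.1*p.2)•z) (x + p.2•y + p.2•z) (p.1•y + p.1•z) := by fun_prop
  have cF2 : Continuous fun p : ℝ×ℝ =>
      B (w + p.1•x + (p.1*p.2)•y) (x + p.2•y) (p.1•y) := by fun_prop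
  have cF4i : Continuous fun u : ℝ => ∫ s in (0:ℝ)..1,
      B (w + u•x + (u*s)•y + (u*s)•z) (x + s•y + s•z) (u•y + u•z) := by
    apply intervalIntegral.continuous_parametric_intervalIntegral_of_continuous'
      (f := fun (u : ℝ) s => B (w + u•x + (u*s)•y + (u*s)•z) (x + s•y + s•z) (u•y + u•z)) ?_ 0 1
    fun_prop
  have cF2i : Continuous fun u : ℝ => ∫ s in (0:ℝ)..1,
      B (w + u•x + (u*s)•y) (x + s•y) (u•y) := by
    apply intervalIntegral.continuous_parametric_intervalIntegral_of_continuous'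
      (f := fun (u : ℝ) s => B (w + u•x + (u*s)•y) (x + s•y) (u•y)) ?_ 0 1
    fun_prop
  have inner : ∀ u : ℝ, (∫ s in (0:ℝ)..1, ∫ t in (0:ℝ)..1, DT B w x y z u s t)
      = (∫ s in (0:ℝ)..1, B (w + u•x + (u*s)•y + (u*s)•z) (x + s•y + s•z) (u•y + u•z))
        - ∫ s in (0:ℝ)..1, B (w + u•x + (u*s)•y) (x + s•y) (u•y) := by
    intro u
    rw [intervalIntegral.integral_congr (fun s _ => hDT1 hsmooth w x y z u s),
        intervalIntegral.integral_sub
          (Continuous.intervalIntegrable (by fun_prop) 0 1)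
          (Continuous.intervalIntegrable (by fun_prop) 0 1)]
  rw [intervalIntegral.integral_congr (fun u _ => inner u),
      intervalIntegral.integral_sub (cF4i.intervalIntegrable 0 1) (cF2i.intervalIntegrable 0 1)]

include hanti in
lemma flux_cocycle
    (hclosed : ∀ (z u v w : Evec n),
      fderiv ℝ B z u v w - fderiv ℝ B z v u w + fderiv ℝ B z w u v = 0)
    (w x y z : Evec n) :
    fluxB B w (w+x+y) (w+x+y+z) + fluxB B w (w+x) (w+x+y)
      = fluxB B (w+x) (w+x+y) (w+x+y+z) + fluxB B w (w+x) (w+x+y+z) := by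
  rw [hF1 hsmooth hanti w x y z, hF2 hsmooth hanti w x y, hF3 hsmooth hanti w x y z,
      hF4 hsmooth hanti w x y z]
  linarith [e1L hsmooth hanti hclosed w x y z, e2L hsmooth w x y z,
    e3L hsmooth w x y z, e4L hsmooth w x y z]

end withSmooth
end main

theorem omegaB_normalized_two_cocycle
    (n : ℕ) (B : Evec n → (Evec n →L[ℝ] Evec n →L[ℝ] ℝ))
    (hsmooth : ContDiff ℝ (⊤ : ℕ∞) B)
    (hbounded : ∃ C : ℝ, ∀ z : Evec n, ‖B z‖ ≤ C)
    (hanti : ∀ (z : Evec n) (u v : Evec n), B z u v = - B z v u)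
    (hclosed : ∀ (z u v w : Evec n),
      fderiv ℝ B z u v w - fderiv ℝ B z v u w + fderiv ℝ B z w u v = 0) :
    (∀ x y z w : Evec n,
      omegaB B w (x + y) z * omegaB B w x y
        = omegaB B (w + x) y z * omegaB B w x (y + z)) ∧
    (∀ x w : Evec n, omegaB B w x 0 = 1) ∧
    (∀ x w : Evec n, omegaB B w 0 x = 1) := by
  refine ⟨fun x y z w => ?_, fun x w => ?_, fun x w => ?_⟩
  · unfold omegaB
    rw [← Complex.exp_add, ← Complex.exp_add]
    congr 1
    rw [show w + (x+y) = w+x+y from (add_assoc w x y).symm,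
        show w+x+(y+z) = w+x+y+z from (add_assoc (w+x) y z).symm]
    have h := flux_cocycle hsmooth hanti hclosed w x y z
    have h2 : ((fluxB B w (w+x+y) (w+x+y+z) : ℝ) : ℂ) + (fluxB B w (w+x) (w+x+y) : ℝ)
        = ((fluxB B (w+x) (w+x+y) (w+x+y+z) : ℝ) : ℂ) + (fluxB B w (w+x) (w+x+y+z) : ℝ) := by
      exact_mod_cast h
    linear_combination (-Complex.I) * h2
  · unfold omegaB fluxB
    simp only [show w + x + 0 - (w + x) = (0 : Evec n) by module]
    simp
  · unfold omegaB fluxB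
    simp only [show w + 0 - w = (0 : Evec n) by module]
    simp
end
end

section
/- For gauge-equivalent vector potentials A' = A + dφ, the magnetic Weyl operators are unitarily equivalent: 𝔒𝔭^{A'}(f) = e^{iφ(Q)} 𝔒𝔭^A(f) e^{-iφ(Q)} for every Schwartz function f on ℝ^{2n}. -/
/- STATEMENT 5: For gauge-equivalent vector potentials A' = A + dφ, the magnetic
Weyl operators are unitarily equivalent:
𝔒𝔭^{A'}(f) = e^{iφ(Q)} 𝔒𝔭^A(f) e^{-iφ(Q)} for every Schwartz f on ℝ^{2n}. -/

noncomputable section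

open MeasureTheory
open scoped RealInnerProductSpace SchwartzMap

noncomputable def lineInt {n : ℕ} (A : Evec n → (Evec n →L[ℝ] ℝ)) (x y : Evec n) : ℝ :=
  ∫ t in (0:ℝ)..1, A (x + t • (y - x)) (y - x)

/-- The magnetic Weyl operator:
[𝔒𝔭^A(f)u](x) := (2π)^{-n} ∫∫ e^{i(x−y)·ξ} e^{-i∫ₓ^y A} f((x+y)/2, ξ) u(y) dy dξ. -/
noncomputable def magOp {n : ℕ} (A : Evec n → (Evec n →L[ℝ] ℝ))
    (f : Evec n × Evec n → ℂ) (u : Evec n → ℂ) : Evec n → ℂ :=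
  fun x => (((2 * Real.pi) ^ n)⁻¹ : ℝ) *
    ∫ ξ : Evec n, ∫ y : Evec n,
      Complex.exp ((⟪x - y, ξ⟫ : ℝ) * Complex.I) *
      Complex.exp (-(lineInt A x y) * Complex.I) *
      f ((2:ℝ)⁻¹ • (x + y), ξ) * u y

lemma lineInt_gauge {n : ℕ} (A A' : Evec n → (Evec n →L[ℝ] ℝ)) (hA : ContDiff ℝ (⊤ : ℕ∞) A)
    (φ : Evec n → ℝ) (hφ : ContDiff ℝ (⊤ : ℕ∞) φ)
    (hgauge : ∀ z : Evec n, A' z = A z + fderiv ℝ φ z) (x y : Evec n) :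
    lineInt A' x y = lineInt A x y + (φ y - φ x) := by
  have hγ : Continuous fun t : ℝ => x + t • (y - x) := by continuity
  have hAc : Continuous fun t : ℝ => A (x + t • (y - x)) (y - x) :=
    ((hA.continuous.comp hγ).clm_apply continuous_const)
  have hdφ : Continuous (fderiv ℝ φ) := (hφ.continuous_fderiv (by simp))
  have hφc : Continuous fun t : ℝ => fderiv ℝ φ (x + t • (y - x)) (y - x) :=
    ((hdφ.comp hγ).clm_apply continuous_const)
  have h1 : lineInt A' x y =
      (∫ t in (0:ℝ)..1, A (x + t • (y - x)) (y - x)) +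
      ∫ t in (0:ℝ)..1, fderiv ℝ φ (x + t • (y - x)) (y - x) := by
    unfold lineInt
    rw [← intervalIntegral.integral_add (hAc.intervalIntegrable 0 1)
      (hφc.intervalIntegrable 0 1)]
    congr 1
    ext t
    rw [hgauge]
    rfl
  have h2 : (∫ t in (0:ℝ)..1, fderiv ℝ φ (x + t • (y - x)) (y - x)) = φ y - φ x := by
    have hderiv : ∀ t ∈ Set.uIcc (0:ℝ) 1,
        HasDerivAt (fun s : ℝ => φ (x + s • (y - x)))
          (fderiv ℝ φ (x + t • (y - x)) (y - x)) t := by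
      intro t _
      have hg : HasDerivAt (fun s : ℝ => x + s • (y - x)) (y - x) t := by
        simpa using ((hasDerivAt_id t).smul_const (y - x)).const_add x
      have hφd : HasFDerivAt φ (fderiv ℝ φ (x + t • (y - x))) (x + t • (y - x)) :=
        (hφ.differentiable (by simp) _).hasFDerivAt
      exact hφd.comp_hasDerivAt t hg
    have := intervalIntegral.integral_eq_sub_of_hasDerivAt hderiv
      (hφc.intervalIntegrable 0 1)
    simpa using this
  rw [h1, h2]; rfl

theorem magOp_gauge_covariance
    (n : ℕ) (A A' : Evec n → (Evec n →L[ℝ] ℝ)) (hA : ContDiff ℝ (⊤ : ℕ∞) A)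
    (φ : Evec n → ℝ) (hφ : ContDiff ℝ (⊤ : ℕ∞) φ)
    (hgauge : ∀ z : Evec n, A' z = A z + fderiv ℝ φ z)
    (f : 𝓢(Evec n × Evec n, ℂ)) :
    ∀ (u : 𝓢(Evec n, ℂ)) (x : Evec n),
      magOp A' (⇑f) (⇑u) x
        = Complex.exp ((φ x : ℝ) * Complex.I) *
            magOp A (⇑f) (fun w => Complex.exp (-(φ w : ℝ) * Complex.I) * u w) x := by
  intro u x
  unfold magOp
  have key : ∀ (ξ y : Evec n),
      Complex.exp ((⟪x - y, ξ⟫ : ℝ) * Complex.I) *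
        Complex.exp (-(lineInt A' x y) * Complex.I) *
        f ((2:ℝ)⁻¹ • (x + y), ξ) * u y
      = Complex.exp ((φ x : ℝ) * Complex.I) *
        (Complex.exp ((⟪x - y, ξ⟫ : ℝ) * Complex.I) *
          Complex.exp (-(lineInt A x y) * Complex.I) *
          f ((2:ℝ)⁻¹ • (x + y), ξ) *
          (Complex.exp (-(φ y : ℝ) * Complex.I) * u y)) := by
    intro ξ y
    rw [lineInt_gauge A A' hA φ hφ hgauge x y]
    rw [show -((lineInt A x y + (φ y - φ x) : ℝ) : ℂ) * Complex.I
        = (-(lineInt A x y) : ℝ) * Complex.I + (-(φ y : ℝ)) * Complex.I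
          + ((φ x : ℝ) : ℂ) * Complex.I by push_cast; ring]
    rw [Complex.exp_add, Complex.exp_add]
    push_cast
    ring
  have hinner : (∫ ξ : Evec n, ∫ y : Evec n,
      Complex.exp ((⟪x - y, ξ⟫ : ℝ) * Complex.I) *
        Complex.exp (-(lineInt A' x y) * Complex.I) *
        f ((2:ℝ)⁻¹ • (x + y), ξ) * u y)
      = Complex.exp ((φ x : ℝ) * Complex.I) *
        ∫ ξ : Evec n, ∫ y : Evec n,
          Complex.exp ((⟪x - y, ξ⟫ : ℝ) * Complex.I) *
            Complex.exp (-(lineInt A x y) * Complex.I) *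
            f ((2:ℝ)⁻¹ • (x + y), ξ) *
            (Complex.exp (-(φ y : ℝ) * Complex.I) * u y) := by
    rw [← MeasureTheory.integral_const_mul]
    congr 1
    ext ξ
    rw [← MeasureTheory.integral_const_mul]
    congr 1
    ext y
    exact key ξ y
  rw [hinner]
  ring
end
end
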